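/- Let Λ be a free ℤ-module of finite rank and c : Λ → Λ a ℤ-linear involution. Then #(Λ⁻/(c−1)Λ) · 2^{rank Λ⁺} = #(Λ⁺/(c+1)Λ) · 2^{rank Λ⁻}. -/

import Mathlib

/-!
For an involution `c`, the map `x ↦ (c - 1) x` sends `Λ` onto `(c - 1)Λ`, and the preimage of
`2Λ⁻` is exactly `Λ⁺ + Λ⁻`. Since `2Λ⁻ ≤ (c - 1)Λ ≤ Λ⁻`, this gives
`[Λ : Λ⁺ + Λ⁻] · [Λ⁻ : (c - 1)Λ] = [Λ⁻ : 2Λ⁻] = 2 ^ rank Λ⁻`.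
Replacing `c` by `-c` swaps `Λ⁺` and `Λ⁻`, and eliminating the common factor `[Λ : Λ⁺ + Λ⁻]`
between the two identities gives the theorem.
-/

open Module

namespace LinearMap

section Ring

variable {R M : Type*} [Ring R] [AddCommGroup M] [Module R M] {c : M →ₗ[R] M}

theorem range_sub_id_le_ker_add_id (hc : Function.Involutive c) :
    range (c - LinearMap.id) ≤ ker (c + LinearMap.id) := by
  rintro _ ⟨x, rfl⟩
  simp [hc x]

theorem map_two_nsmul_ker_add_id_le_range_sub_id :
    (ker (c + LinearMap.id)).toAddSubgroup.map (nsmulAddMonoidHom 2) ≤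
      (range (c - LinearMap.id)).toAddSubgroup := by
  rintro _ ⟨b, hb, rfl⟩
  have hcb : c b = -b := eq_neg_of_add_eq_zero_left hb
  exact ⟨-b, by simp [hcb, two_nsmul]⟩

theorem comap_sub_id_map_two_nsmul_ker_add_id :
    ((ker (c + LinearMap.id)).toAddSubgroup.map (nsmulAddMonoidHom 2)).comap
        (c - LinearMap.id).toAddMonoidHom =
      (ker (c - LinearMap.id) ⊔ ker (c + LinearMap.id)).toAddSubgroup := by
  ext x
  simp only [AddSubgroup.mem_comap, AddSubgroup.mem_map, Submodule.mem_toAddSubgroup,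
    Submodule.mem_sup, mem_ker, nsmulAddMonoidHom_apply, toAddMonoidHom_coe, sub_apply,
    add_apply, id_apply]
  constructor
  · rintro ⟨b, hb, hx⟩
    have hcb : c b = -b := eq_neg_of_add_eq_zero_left hb
    refine ⟨x + b, ?_, -b, by simp [hcb], by abel⟩
    rw [map_add, hcb]
    linear_combination (norm := module) -hx
  · rintro ⟨a, ha, b, hb, rfl⟩
    have hcb : c b = -b := eq_neg_of_add_eq_zero_left hb
    refine ⟨-b, by simp [hcb], ?_⟩
    rw [map_add, hcb]
    linear_combination (norm := module) -ha

theorem index_sup_ker_eq_relIndex :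
    (ker (c - LinearMap.id) ⊔ ker (c + LinearMap.id)).toAddSubgroup.index =
      ((ker (c + LinearMap.id)).toAddSubgroup.map (nsmulAddMonoidHom 2)).relIndex
        (range (c - LinearMap.id)).toAddSubgroup := by
  rw [← comap_sub_id_map_two_nsmul_ker_add_id, AddSubgroup.index_comap, range_toAddSubgroup]

end Ring

theorem index_sup_ker_mul_relIndex_range_sub_id {M : Type*} [AddCommGroup M] [Module ℤ M]
    [Module.Free ℤ M] [Module.Finite ℤ M] {c : M →ₗ[ℤ] M} (hc : Function.Involutive c) :
    (ker (c - LinearMap.id) ⊔ ker (c + LinearMap.id)).toAddSubgroup.index *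
        (range (c - LinearMap.id)).toAddSubgroup.relIndex (ker (c + LinearMap.id)).toAddSubgroup =
      2 ^ finrank ℤ (ker (c + LinearMap.id)) := by
  -- `AddSubgroup.relIndex_map_nsmul` is stated for the canonical `ℤ`-module structure
  obtain rfl := Subsingleton.elim ‹Module ℤ M› (AddCommGroup.toIntModule M)
  rw [index_sup_ker_eq_relIndex, AddSubgroup.relIndex_mul_relIndex _ _ _
    map_two_nsmul_ker_add_id_le_range_sub_id
    (Submodule.toAddSubgroup_mono (range_sub_id_le_ker_add_id hc))]
  exact AddSubgroup.relIndex_map_nsmul 2 _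

theorem index_sup_ker_mul_relIndex_range_add_id {M : Type*} [AddCommGroup M] [Module ℤ M]
    [Module.Free ℤ M] [Module.Finite ℤ M] {c : M →ₗ[ℤ] M} (hc : Function.Involutive c) :
    (ker (c - LinearMap.id) ⊔ ker (c + LinearMap.id)).toAddSubgroup.index *
        (range (c + LinearMap.id)).toAddSubgroup.relIndex (ker (c - LinearMap.id)).toAddSubgroup =
      2 ^ finrank ℤ (ker (c - LinearMap.id)) := by
  have h := index_sup_ker_mul_relIndex_range_sub_id (c := -c) fun x ↦ by simp [hc x]
  rwa [show -c - LinearMap.id = -(c + LinearMap.id) by abel,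
    show -c + LinearMap.id = -(c - LinearMap.id) by abel, ker_neg, ker_neg, range_neg,
    sup_comm] at h

end LinearMap

/-- Let `Λ` be a free `ℤ`-module of finite rank and `c : Λ → Λ` a `ℤ`-linear involution.
Then `#(Λ⁻/(c−1)Λ) · 2^(rank Λ⁺) = #(Λ⁺/(c+1)Λ) · 2^(rank Λ⁻)`,
where `Λ⁺ = ker (c - 1)`, `Λ⁻ = ker (c + 1)`. -/
theorem card_quotient_mul_two_pow_eq (Λ : Type*) [AddCommGroup Λ] [Module ℤ Λ]
    [Module.Free ℤ Λ] [Module.Finite ℤ Λ]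
    (c : Λ →ₗ[ℤ] Λ) (hc : c ∘ₗ c = LinearMap.id) :
    Nat.card ((LinearMap.ker (c + LinearMap.id)).toAddSubgroup ⧸
        (LinearMap.range (c - LinearMap.id)).toAddSubgroup.addSubgroupOf
          (LinearMap.ker (c + LinearMap.id)).toAddSubgroup) *
      2 ^ Module.finrank ℤ (LinearMap.ker (c - LinearMap.id)) =
    Nat.card ((LinearMap.ker (c - LinearMap.id)).toAddSubgroup ⧸
        (LinearMap.range (c + LinearMap.id)).toAddSubgroup.addSubgroupOf
          (LinearMap.ker (c - LinearMap.id)).toAddSubgroup) *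
      2 ^ Module.finrank ℤ (LinearMap.ker (c + LinearMap.id)) := by
  have hinv : Function.Involutive c := LinearMap.congr_fun hc
  have hminus := LinearMap.index_sup_ker_mul_relIndex_range_sub_id hinv
  have hplus := LinearMap.index_sup_ker_mul_relIndex_range_add_id hinv
  set k :=
    (LinearMap.ker (c - LinearMap.id) ⊔ LinearMap.ker (c + LinearMap.id)).toAddSubgroup.index
  rw [AddSubgroup.relIndex, AddSubgroup.index] at hminus hplus
  have hk : k ≠ 0 := left_ne_zero_of_mul (hminus ▸ pow_ne_zero _ two_ne_zero)
  refine Nat.eq_of_mul_eq_mul_left (Nat.pos_of_ne_zero hk) ?_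
  rw [← mul_assoc, ← mul_assoc, hminus, hplus, mul_comm]
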